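/- arXiv:0808.1991 — 2 statements merged into one kernel-verified Lean document; each statement's English description precedes it below -/
import Mathlib

section
/- Let d be an integer. A simplicial complex K is (d−1)-representable if and only if its suspension susp K is d-representable. -/
/-!
Forward: if convex sets `C v ⊆ ℝ^(d-1)` represent `K`, then the cylinders `C v × ℝ`, together
with the parallel hyperplanes `ℝ^(d-1) × {0}` and `ℝ^(d-1) × {1}` for the two apices, represent
`susp K`.

Backward: in a representation of `susp K` in `ℝ^d` the apex sets `A`, `B` are disjoint convex
sets, since the two apices span no face. For every face `σ` of `K` the convex set
`D σ = ⋂ v ∈ σ, D v` meets both `A` and `B`; a hyperplane `H` strictly separating these finitely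
many witnesses (compact convex hulls suffice, no separation theorem for general convex sets is
needed) therefore meets `D σ`. Conversely `H ∩ D σ ≠ ∅` forces `σ ∈ K`, so the traces of the
`D v` on `H ≅ ℝ^(d-1)` represent `K`.
-/

open Finset

/-- An (abstract, finite) simplicial complex: a set system closed under taking subsets. -/
def IsComplex {V : Type*} (K : Finset (Finset V)) : Prop :=
  ∀ σ ∈ K, ∀ τ ⊆ σ, τ ∈ K

/-- The suspension of `K`, with the two new apex vertices `Sum.inr true` and
`Sum.inr false`. -/
def susp {V : Type*} [DecidableEq V] (K : Finset (Finset V)) :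
    Finset (Finset (V ⊕ Bool)) :=
  K.image (Finset.image Sum.inl) ∪
  K.image (fun σ => insert (Sum.inr true) (σ.image Sum.inl)) ∪
  K.image (fun σ => insert (Sum.inr false) (σ.image Sum.inl))

/-- `K` is `d`-representable: it is the nerve of a family of convex sets in `ℝ^d`
indexed by its vertex set. -/
def Representable (d : ℕ) {V : Type*} (K : Finset (Finset V)) : Prop :=
  ∃ C : V → Set (Fin d → ℝ), (∀ v, Convex ℝ (C v)) ∧
    ∀ σ : Finset V, σ ∈ K ↔ (⋂ v ∈ σ, C v).Nonempty

theorem Finset.ne_univ_iff_bool {T : Finset Bool} :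
    T ≠ univ ↔ T = ∅ ∨ T = {true} ∨ T = {false} := by
  revert T; decide


theorem Set.biInter_disjSum {X α β : Type*} (σ : Finset α) (T : Finset β)
    (D : α ⊕ β → Set X) :
    ⋂ u ∈ σ.disjSum T, D u = (⋂ a ∈ σ, D (.inl a)) ∩ ⋂ b ∈ T, D (.inr b) := by
  ext x
  simp [Sum.forall]

theorem Set.biInter_singleton_nonempty_iff_ne_univ {α : Type*} {f : Bool → α}
    (hf : Function.Injective f) {T : Finset Bool} :
    (⋂ b ∈ T, ({f b} : Set α)).Nonempty ↔ T ≠ Finset.univ := by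
  constructor
  · rintro ⟨x, hx⟩ rfl
    simp only [Set.mem_iInter, Finset.mem_univ, Set.mem_singleton_iff, forall_const] at hx
    exact Bool.true_eq_false.mp (hf ((hx true).symm.trans (hx false)))
  · intro hT
    rcases ne_univ_iff_bool.mp hT with rfl | rfl | rfl
    · exact ⟨f true, by simp⟩
    all_goals simp

theorem exists_strict_separation_of_finite {E : Type*} [TopologicalSpace E] [AddCommGroup E]
    [IsTopologicalAddGroup E] [Module ℝ E] [ContinuousSMul ℝ E] [LocallyConvexSpace ℝ E]
    [T2Space E] {A B s t : Set E} (hA : Convex ℝ A) (hB : Convex ℝ B) (hAB : Disjoint A B)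
    (hs : s.Finite) (ht : t.Finite) (hsA : s ⊆ A) (htB : t ⊆ B) :
    ∃ (f : StrongDual ℝ E) (c : ℝ), (∀ a ∈ s, f a < c) ∧ ∀ b ∈ t, c < f b := by
  obtain ⟨f, u, v, hu, huv, hv⟩ := geometric_hahn_banach_compact_closed
    (convex_convexHull ℝ s) (hs.isCompact_convexHull ℝ)
    (convex_convexHull ℝ t) (ht.isCompact_convexHull ℝ).isClosed
    (hAB.mono (convexHull_min hsA hA) (convexHull_min htB hB))
  exact ⟨f, u, fun a ha => hu a (subset_convexHull ℝ s ha),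
    fun b hb => huv.trans (hv b (subset_convexHull ℝ t hb))⟩

section Representability

variable {n : ℕ} {V : Type*} {K : Finset (Finset V)}
  {E : Type*} [AddCommGroup E] [Module ℝ E] [FiniteDimensional ℝ E]

theorem representable_of_finrank_eq (hE : Module.finrank ℝ E = n) (C : V → Set E)
    (hC : ∀ v, Convex ℝ (C v)) (hK : ∀ σ, σ ∈ K ↔ (⋂ v ∈ σ, C v).Nonempty) :
    Representable n K := by
  let e : E ≃ₗ[ℝ] (Fin n → ℝ) := LinearEquiv.ofFinrankEq _ _ (by simpa using hE)
  refine ⟨fun v => e '' C v, fun v => (hC v).linear_image e.toLinearMap, fun σ => ?_⟩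
  rw [hK, ← Set.image_iInter₂ e.bijective, Set.image_nonempty]

theorem representable_of_hyperplane (hE : Module.finrank ℝ E = n + 1) {f : E →ₗ[ℝ] ℝ}
    (hf : f ≠ 0) (c : ℝ) (D : V → Set E) (hD : ∀ v, Convex ℝ (D v))
    (hK : ∀ σ, σ ∈ K ↔ (f ⁻¹' {c} ∩ ⋂ v ∈ σ, D v).Nonempty) :
    Representable n K := by
  obtain ⟨x₀, hx₀⟩ := LinearMap.surjective hf c
  refine representable_of_finrank_eq (E := LinearMap.ker f) ?_
    (fun v => {w | (w : E) + x₀ ∈ D v}) (fun v => ?_) (fun σ => ?_)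
  · have := Module.Dual.finrank_ker_add_one_of_ne_zero hf
    omega
  · exact ((hD v).translate_preimage_left x₀).linear_preimage (LinearMap.ker f).subtype
  · rw [hK]
    constructor
    · rintro ⟨x, hx, hxD⟩
      exact ⟨⟨x - x₀, by simp_all⟩, by simpa using hxD⟩
    · rintro ⟨w, hw⟩
      exact ⟨w + x₀, by simp [hx₀], by simpa using hw⟩

end Representability

section Suspension

variable {n : ℕ} {V : Type*} [DecidableEq V] {K : Finset (Finset V)}

theorem disjSum_mem_susp_iff {σ : Finset V} {T : Finset Bool} :
    σ.disjSum T ∈ susp K ↔ σ ∈ K ∧ T ≠ univ := by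
  have h_inl (τ : Finset V) : τ.image Sum.inl = τ.disjSum (∅ : Finset Bool) := by
    ext (x | x) <;> simp
  have h_inr (τ : Finset V) (b : Bool) :
      insert (Sum.inr b) (τ.image Sum.inl) = τ.disjSum {b} := by
    ext (x | x) <;> simp
  simp only [susp, h_inr]
  simp only [h_inl, mem_union, mem_image, disjSum_inj, ne_univ_iff_bool]
  aesop

theorem Representable.succ_susp (h : Representable n K) : Representable (n + 1) (susp K) := by
  obtain ⟨C, hC, hK⟩ := h
  refine representable_of_finrank_eq (E := (Fin n → ℝ) × ℝ) (by simp)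
    (Sum.elim (fun v => Prod.fst ⁻¹' C v) fun b => Prod.snd ⁻¹' {(b.toNat : ℝ)})
    (fun u => ?_) (fun s => ?_)
  · rcases u with v | b
    · exact (hC v).linear_preimage (LinearMap.fst ℝ _ _)
    · exact (convex_singleton _).linear_preimage (LinearMap.snd ℝ _ _)
  · obtain ⟨σ, T, rfl⟩ : ∃ (σ : Finset V) (T : Finset Bool), s = σ.disjSum T :=
      ⟨_, _, toLeft_disjSum_toRight.symm⟩
    have h_height : Function.Injective fun b : Bool => (b.toNat : ℝ) := fun a b h => by
      cases a <;> cases b <;> simp_all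
    rw [disjSum_mem_susp_iff, Set.biInter_disjSum]
    simp only [Sum.elim_inl, Sum.elim_inr, ← Set.preimage_iInter₂, ← Set.prod_eq,
      Set.prod_nonempty_iff, hK, Set.biInter_singleton_nonempty_iff_ne_univ h_height]

theorem Representable.of_succ_susp (h : Representable (n + 1) (susp K)) :
    Representable n K := by
  obtain ⟨D, hD, hK⟩ := h
  have hface (σ : Finset V) (T : Finset Bool) : σ ∈ K ∧ T ≠ univ ↔
      ((⋂ v ∈ σ, D (.inl v)) ∩ ⋂ b ∈ T, D (.inr b)).Nonempty := by
    rw [← disjSum_mem_susp_iff, hK, Set.biInter_disjSum]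
  have h_apex (σ : K) (b : Bool) :
      ∃ x ∈ D (.inr b), x ∈ ⋂ v ∈ (σ : Finset V), D (.inl v) := by
    obtain ⟨x, hxσ, hxb⟩ := (hface σ {b}).1 ⟨σ.2, by revert b; decide⟩
    exact ⟨x, by simpa using hxb, hxσ⟩
  have hdisj : Disjoint (D (.inr true)) (D (.inr false)) :=
    Set.disjoint_right.2 (by simpa using (hface ∅ univ).not)
  choose x hxA hxσ using fun σ => h_apex σ true
  choose y hyB hyσ using fun σ => h_apex σ false
  obtain ⟨f, c, hfx, hfy⟩ := exists_strict_separation_of_finite (hD _) (hD _) hdisj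
    (Set.finite_range x) (Set.finite_range y) (Set.range_subset_iff.2 hxA)
    (Set.range_subset_iff.2 hyB)
  have hf : f ≠ 0 := by
    have hempty : ∅ ∈ K := ((hface ∅ ∅).2 (by simp)).1
    rintro rfl
    simpa using (hfx _ ⟨⟨∅, hempty⟩, rfl⟩).trans (hfy _ ⟨⟨∅, hempty⟩, rfl⟩)
  refine representable_of_hyperplane (by simp) (ContinuousLinearMap.coe_injective.ne hf) c
    (fun v => D (.inl v)) (fun v => hD _) fun σ => ⟨fun hσ => ?_, fun h => ?_⟩
  · obtain ⟨z, hz, hfz⟩ := (convex_iInter₂ fun v _ => hD (.inl v)).isPreconnected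
      |>.intermediate_value (hxσ ⟨σ, hσ⟩) (hyσ ⟨σ, hσ⟩) f.continuous.continuousOn
        ⟨(hfx _ ⟨_, rfl⟩).le, (hfy _ ⟨_, rfl⟩).le⟩
    exact ⟨z, hfz, hz⟩
  · exact ((hface σ ∅).2 (by simpa using h.mono Set.inter_subset_right)).1

end Suspension

theorem stmt14_general (d : ℕ) (hd : 1 ≤ d) {V : Type*} [DecidableEq V]
    (K : Finset (Finset V)) :
    Representable (d - 1) K ↔ Representable d (susp K) := by
  obtain ⟨n, rfl⟩ := Nat.exists_eq_add_of_le' hd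
  exact ⟨Representable.succ_susp, Representable.of_succ_susp⟩

/-- A simplicial complex `K` is `(d-1)`-representable iff its suspension is
`d`-representable. -/
theorem stmt14 (d : ℕ) (hd : 1 ≤ d) {V : Type*} [DecidableEq V]
    (K : Finset (Finset V)) (hK : IsComplex K) :
    Representable (d - 1) K ↔ Representable d (susp K) :=
  stmt14_general d hd K
end

section
/- If K is a (d−1)-representable simplicial complex with representation by convex sets K_1,…,K_t ⊆ ℝ^{d−1}, then the family {K_1 × [0,1], …, K_t × [0,1], ℝ^{d−1} × {0}, ℝ^{d−1} × {1}} of convex sets in ℝ^d has nerve isomorphic to susp K; in particular susp K is d-representable. -/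
open Finset

/-- `K` is the nerve of the family `C` of convex sets in the real vector space `E`. -/
def IsNerveOf {V E : Type*} [AddCommGroup E] [Module ℝ E]
    (K : Finset (Finset V)) (C : V → Set E) : Prop :=
  (∀ v, Convex ℝ (C v)) ∧ ∀ σ : Finset V, σ ∈ K ↔ (⋂ v ∈ σ, C v).Nonempty

/-- If `K` is represented by convex sets `C v ⊆ ℝ^{d-1}`, then the family consisting of the
prisms `C v × [0,1]` together with the hyperplanes `ℝ^{d-1} × {0}` (for `a`) and
`ℝ^{d-1} × {1}` (for `b`) represents `susp K` in `ℝ^{d-1} × ℝ ≅ ℝ^d`; in particular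
`susp K` is `d`-representable. -/
theorem stmt15 (d : ℕ) (hd : 1 ≤ d) {V : Type*} [DecidableEq V]
    (K : Finset (Finset V)) (hK : IsComplex K)
    (C : V → Set (Fin (d - 1) → ℝ)) (hC : IsNerveOf K C) :
    IsNerveOf (susp K)
      (Sum.elim (fun v => C v ×ˢ Set.Icc (0 : ℝ) 1)
        (fun b : Bool =>
          (Set.univ : Set (Fin (d - 1) → ℝ)) ×ˢ ({if b then 0 else 1} : Set ℝ))) ∧
    ∃ D : V ⊕ Bool → Set ((Fin (d - 1) → ℝ) × ℝ), IsNerveOf (susp K) D := by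
  obtain ⟨hconv, hmem⟩ := hC
  set S := (Sum.elim (fun v => C v ×ˢ Set.Icc (0 : ℝ) 1)
        (fun b : Bool =>
          (Set.univ : Set (Fin (d - 1) → ℝ)) ×ˢ ({if b then 0 else 1} : Set ℝ)))
    with hS
  have key : IsNerveOf (susp K) S := by
    constructor
    · rintro (v | b)
      · exact (hconv v).prod (convex_Icc 0 1)
      · exact convex_univ.prod (convex_singleton _)
    · intro σ
      constructor
      · intro hσ
        simp only [susp, mem_union, mem_image] at hσ
        rcases hσ with ((⟨τ, hτ, rfl⟩ | ⟨τ, hτ, rfl⟩) | ⟨τ, hτ, rfl⟩)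
        · obtain ⟨x, hx⟩ := (hmem τ).1 hτ
          simp only [Set.mem_iInter] at hx
          refine ⟨(x, 0), Set.mem_iInter₂.2 ?_⟩
          rintro u hu
          obtain ⟨v, hv, rfl⟩ := Finset.mem_image.1 hu
          exact ⟨hx v hv, by norm_num⟩
        · obtain ⟨x, hx⟩ := (hmem τ).1 hτ
          simp only [Set.mem_iInter] at hx
          refine ⟨(x, 0), Set.mem_iInter₂.2 ?_⟩
          rintro u hu
          rcases Finset.mem_insert.1 hu with rfl | hu
          · simp [hS]
          · obtain ⟨v, hv, rfl⟩ := Finset.mem_image.1 hu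
            exact ⟨hx v hv, by norm_num⟩
        · obtain ⟨x, hx⟩ := (hmem τ).1 hτ
          simp only [Set.mem_iInter] at hx
          refine ⟨(x, 1), Set.mem_iInter₂.2 ?_⟩
          rintro u hu
          rcases Finset.mem_insert.1 hu with rfl | hu
          · simp [hS]
          · obtain ⟨v, hv, rfl⟩ := Finset.mem_image.1 hu
            exact ⟨hx v hv, by norm_num⟩
      · rintro ⟨⟨x, t⟩, hp⟩
        have hp' : ∀ u ∈ σ, (x, t) ∈ S u := Set.mem_iInter₂.1 hp
        set τ : Finset V := σ.preimage Sum.inl Sum.inl_injective.injOn with hτ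
        have hmemτ : ∀ v, v ∈ τ ↔ Sum.inl v ∈ σ := fun v => Finset.mem_preimage
        have hτK : τ ∈ K := by
          refine (hmem τ).2 ⟨x, Set.mem_iInter₂.2 fun v hv => ?_⟩
          exact ((hp' _ ((hmemτ v).1 hv)) : (x, t) ∈ C v ×ˢ Set.Icc (0:ℝ) 1).1
        have hnotboth : ¬ (Sum.inr true ∈ σ ∧ Sum.inr false ∈ σ) := by
          rintro ⟨h1, h2⟩
          have e1 := (hp' _ h1).2
          have e2 := (hp' _ h2).2
          simp only [hS, Sum.elim_inr, if_true, if_false, Set.mem_singleton_iff] at e1 e2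
          rw [e1] at e2
          norm_num at e2
        have hinl : ∀ u ∈ σ, ∀ v, u = Sum.inl v → u ∈ τ.image Sum.inl := by
          rintro u hu v rfl
          exact Finset.mem_image.2 ⟨v, (hmemτ v).2 hu, rfl⟩
        simp only [susp, mem_union, mem_image]
        by_cases h1 : Sum.inr true ∈ σ
        · have h2 : Sum.inr false ∉ σ := fun h => hnotboth ⟨h1, h⟩
          refine Or.inl (Or.inr ⟨τ, hτK, ?_⟩)
          ext u
          rcases u with v | b
          · simp only [Finset.mem_insert, Finset.mem_image]
            constructor
            · rintro (h | ⟨w, hw, hwe⟩)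
              · exact absurd h (by simp)
              · cases hwe; exact (hmemτ _).1 hw
            · intro h; exact Or.inr ⟨v, (hmemτ v).2 h, rfl⟩
          · cases b
            · simp only [Finset.mem_insert, Finset.mem_image]
              constructor
              · rintro (h | ⟨w, hw, hwe⟩)
                · exact absurd h (by simp)
                · cases hwe
              · intro h; exact absurd h h2
            · simp [h1]
        · by_cases h2 : Sum.inr false ∈ σ
          · refine Or.inr ⟨τ, hτK, ?_⟩
            ext u
            rcases u with v | b
            · simp only [Finset.mem_insert, Finset.mem_image]
              constructor
              · rintro (h | ⟨w, hw, hwe⟩)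
                · exact absurd h (by simp)
                · cases hwe; exact (hmemτ _).1 hw
              · intro h; exact Or.inr ⟨v, (hmemτ v).2 h, rfl⟩
            · cases b
              · simp [h2]
              · simp only [Finset.mem_insert, Finset.mem_image]
                constructor
                · rintro (h | ⟨w, hw, hwe⟩)
                  · exact absurd h (by simp)
                  · cases hwe
                · intro h; exact absurd h h1
          · refine Or.inl (Or.inl ⟨τ, hτK, ?_⟩)
            ext u
            rcases u with v | b
            · simp only [Finset.mem_image]
              constructor
              · rintro ⟨w, hw, hwe⟩; cases hwe; exact (hmemτ _).1 hw
              · intro h; exact ⟨v, (hmemτ v).2 h, rfl⟩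
            · simp only [Finset.mem_image]
              constructor
              · rintro ⟨w, hw, hwe⟩; cases hwe
              · intro h; cases b
                · exact absurd h h2
                · exact absurd h h1
  exact ⟨key, S, key⟩
end
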